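/- arXiv:2206.09376 — 6 statements merged into one kernel-verified Lean document; each statement's English description precedes it below -/
import Mathlib

section
/- Let S, A, B be finite types and let g be a matrix over ℂ with rows indexed by B × S and columns indexed by A × S. For each k ≥ 1 define the accumulating map G_k, a matrix with rows indexed by (Fin k → B) × S and columns indexed by (Fin k → A) × S, recursively by G_1 ((y,t),(x,s)) = g ((y 0, t),(x 0, s)) and G_{k+1} ((y,t),(x,s)) = Σ_{u : S} G_k ((y ∘ Fin.succ, t),(x ∘ Fin.succ, u)) · g ((y 0, u),(x 0, s)). Then for every k ≥ 1 and all y, t, x, s, G_k ((y,t),(x,s)) equals the contracted chain sum Σ over functions c : Fin (k+1) → S with c 0 = s and c k = t of the product ∏_{i : Fin k} g ((y i, c (i+1)),(x i, c i)). -/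
open Matrix BigOperators Finset

/-- The accumulating map `G_{k+1}` built from `g : A ⊗ S → B ⊗ S` (as a matrix over ℂ),
threading the accumulator register `S` sequentially through `k+1` parallel copies of `g`.
`accMap g k` is the map `G_{k+1}` of the paper, so that all indices `k ≥ 1` are covered:
`accMap g 0 ((y,t),(x,s)) = g ((y 0, t),(x 0, s))` and
`accMap g (k+1) ((y,t),(x,s)) = ∑ u, accMap g k ((y∘succ,t),(x∘succ,u)) * g ((y 0,u),(x 0,s))`. -/
noncomputable def accMap {S A B : Type*} [Fintype S]
    (g : Matrix (B × S) (A × S) ℂ) :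
    (k : ℕ) → Matrix ((Fin (k + 1) → B) × S) ((Fin (k + 1) → A) × S) ℂ
  | 0 => fun p q => g (p.1 0, p.2) (q.1 0, q.2)
  | k + 1 => fun p q => ∑ u : S,
      accMap g k (p.1 ∘ Fin.succ, p.2) (q.1 ∘ Fin.succ, u) * g (p.1 0, u) (q.1 0, q.2)

/-- The accumulating map `G_k` (for `k ≥ 1`, here `k = k'+1`) equals the contracted chain sum:
the sum over chains `c : Fin (k+1) → S` with `c 0 = s` and `c k = t` of the product over the
`k` copies of `g` of the corresponding entries `g ((y i, c (i+1)), (x i, c i))`. -/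
theorem accMap_eq_chain_sum {S A B : Type*} [Fintype S] [Fintype A] [Fintype B]
    [DecidableEq S]
    (g : Matrix (B × S) (A × S) ℂ) (k : ℕ)
    (y : Fin (k + 1) → B) (t : S) (x : Fin (k + 1) → A) (s : S) :
    accMap g k (y, t) (x, s) =
      ∑ c ∈ Finset.univ.filter
          (fun c : Fin (k + 2) → S => c 0 = s ∧ c (Fin.last (k + 1)) = t),
        ∏ i : Fin (k + 1), g (y i, c i.succ) (x i, c i.castSucc) := by

  induction k generalizing s with
  | zero =>
    have hfilter : Finset.univ.filter
        (fun c : Fin 2 → S => c 0 = s ∧ c (Fin.last 1) = t) = {![s, t]} := by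
      ext c
      simp [funext_iff, Fin.forall_fin_two, show (Fin.last 1) = 1 from rfl]
    rw [hfilter, Finset.sum_singleton]
    simp [accMap, Fin.prod_univ_one]
  | succ k ih =>
    show (∑ u : S, accMap g k (y ∘ Fin.succ, t) (x ∘ Fin.succ, u) * g (y 0, u) (x 0, s)) = _
    have step1 : ∀ u : S, accMap g k (y ∘ Fin.succ, t) (x ∘ Fin.succ, u)
        = ∑ c ∈ Finset.univ.filter
            (fun c : Fin (k + 2) → S => c 0 = u ∧ c (Fin.last (k + 1)) = t),
          ∏ i : Fin (k + 1), g (y i.succ, c i.succ) (x i.succ, c i.castSucc) :=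
      fun u => ih (y ∘ Fin.succ) (x ∘ Fin.succ) u
    calc
      (∑ u : S, accMap g k (y ∘ Fin.succ, t) (x ∘ Fin.succ, u) * g (y 0, u) (x 0, s))
          = ∑ u : S, ∑ c ∈ Finset.univ.filter
              (fun c : Fin (k + 2) → S => c 0 = u ∧ c (Fin.last (k + 1)) = t),
            (∏ i : Fin (k + 1), g (y i.succ, c i.succ) (x i.succ, c i.castSucc))
              * g (y 0, c 0) (x 0, s) := by
        refine Finset.sum_congr rfl fun u _ => ?_
        rw [step1, Finset.sum_mul]
        refine Finset.sum_congr rfl fun c hc => ?_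
        rw [(Finset.mem_filter.mp hc).2.1]
      _ = ∑ u : S, ∑ c ∈ (Finset.univ.filter
              (fun c : Fin (k + 2) → S => c (Fin.last (k + 1)) = t)).filter
              (fun c => c 0 = u),
            (∏ i : Fin (k + 1), g (y i.succ, c i.succ) (x i.succ, c i.castSucc))
              * g (y 0, c 0) (x 0, s) := by
        refine Finset.sum_congr rfl fun u _ => ?_
        rw [Finset.filter_filter]
        exact Finset.sum_congr (Finset.filter_congr fun c _ => and_comm) fun _ _ => rfl
      _ = ∑ c ∈ Finset.univ.filter
              (fun c : Fin (k + 2) → S => c (Fin.last (k + 1)) = t),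
            (∏ i : Fin (k + 1), g (y i.succ, c i.succ) (x i.succ, c i.castSucc))
              * g (y 0, c 0) (x 0, s) :=
        Finset.sum_fiberwise _ _ _
      _ = ∑ c ∈ Finset.univ.filter
              (fun c : Fin (k + 3) → S => c 0 = s ∧ c (Fin.last (k + 2)) = t),
            ∏ i : Fin (k + 2), g (y i, c i.succ) (x i, c i.castSucc) := by
        refine Finset.sum_nbij' (fun c => Fin.cons s c) (fun c => c ∘ Fin.succ)
          ?_ ?_ ?_ ?_ ?_
        · intro c hc
          have h := (Finset.mem_filter.mp hc).2
          simp only [Finset.mem_filter, Finset.mem_univ, true_and]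
          refine ⟨Fin.cons_zero _ _, ?_⟩
          rw [show (Fin.last (k + 2)) = (Fin.last (k + 1)).succ from rfl,
            Fin.cons_succ]
          exact h
        · intro c hc
          have h := (Finset.mem_filter.mp hc).2
          simp only [Finset.mem_filter, Finset.mem_univ, true_and]
          show c ((Fin.last (k + 1)).succ) = t
          rw [show (Fin.last (k + 1)).succ = Fin.last (k + 2) from rfl]
          exact h.2
        · intro c hc
          funext i
          simp [Fin.cons_succ]
        · intro c hc
          have h := (Finset.mem_filter.mp hc).2
          have : Fin.cons (c 0) (Fin.tail c) = c := Fin.cons_self_tail c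
          rw [← h.1] at *
          exact this
        · intro c hc
          conv_rhs => rw [Fin.prod_univ_succ]
          simp only [Fin.cons_succ, Fin.cons_zero, Fin.castSucc_zero,
            ← Fin.succ_castSucc]
          exact mul_comm _ _
end

section
/- For all natural numbers n, a, b, c, with k = a + c + b + c, and for every natural number i < n·k, the value τ(i) defined by the four-case formula satisfies τ(i) < n·k. -/
/-- The wire permutation `τ_{n,A,B,C}` used in the SZX translation of the `accuMap`
primitive, where `a`, `b`, `c` are the multiplicities of the registers `A`, `B`, `C`
and `k = a + c + b + c`. -/
def tau (n a b c : ℕ) (i : ℕ) : ℕ :=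
  let k := a + c + b + c
  let q := i / k
  let r := i % k
  if r < a then r + a * q
  else if r < a + c then r + c * q + a * (n - 1)
  else if r < a + c + b then r + b * q + (a + c) * (n - 1)
  else r + c * q + (a + c + b) * (n - 1)

/-- For every `i < n·k`, the value `τ(i)` satisfies `τ(i) < n·k`. -/
theorem tau_lt (n a b c : ℕ) (i : ℕ) (hi : i < n * (a + c + b + c)) :
    tau n a b c i < n * (a + c + b + c) := by
  unfold tau
  dsimp only
  set k := a + c + b + c with hk
  have hkpos : 0 < k := by
    rcases Nat.eq_zero_or_pos k with h | h
    · rw [h, Nat.mul_zero] at hi; omega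
    · exact h
  have hn : 0 < n := by
    rcases Nat.eq_zero_or_pos n with h | h
    · rw [h, Nat.zero_mul] at hi; omega
    · exact h
  obtain ⟨m, rfl⟩ : ∃ m, n = m + 1 := ⟨n - 1, by omega⟩
  have hq : i / k ≤ m := Nat.lt_succ_iff.mp ((Nat.div_lt_iff_lt_mul hkpos).mpr hi)
  have hkm : (m + 1) * k = k + a * m + c * m + b * m + c * m := by rw [hk]; ring
  have hr : i % k < k := Nat.mod_lt _ hkpos
  simp only [Nat.add_sub_cancel]
  have hak : a ≤ k := by omega
  have hack : a + c ≤ k := by omega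
  have hacbk : a + c + b ≤ k := by omega
  split_ifs with h1 h2 h3
  · nlinarith [Nat.mul_le_mul_left a hq, Nat.mul_le_mul_right (m+1) hak, hkm]
  · nlinarith [Nat.mul_le_mul_left c hq, Nat.mul_le_mul_right (m+1) hack, hkm]
  · nlinarith [Nat.mul_le_mul_left b hq, Nat.mul_le_mul_right (m+1) hacbk, hkm]
  · nlinarith [Nat.mul_le_mul_left c hq, hkm]
end

section
/- For all natural numbers n, a, b, c with k = a + c + b + c, the map i ↦ τ(i) restricts to a bijection of the set {0, 1, …, n·k − 1} onto itself; equivalently, τ induces a permutation of Fin (n·k). -/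
/-- Explicit inverse of `tau`. -/
def tauInv (n a b c : ℕ) (j : ℕ) : ℕ :=
  let k := a + c + b + c
  if j < a * n then j % a + k * (j / a)
  else if j < (a + c) * n then
    a + (j - a * n) % c + k * ((j - a * n) / c)
  else if j < (a + c + b) * n then
    a + c + (j - (a + c) * n) % b + k * ((j - (a + c) * n) / b)
  else
    a + c + b + (j - (a + c + b) * n) % c + k * ((j - (a + c + b) * n) / c)

private lemma sub_lt_of (A C j : ℕ) (h1 : A ≤ j) (h2 : j < A + C) : j - A < C := by omega

private lemma add_sub_of (A j : ℕ) (h : A ≤ j) : A + (j - A) = j := by omega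

private lemma tau_eval (a b c m x q : ℕ) (hx : x < a + c + b + c) :
    tau (m + 1) a b c (x + (a + c + b + c) * q) =
      if x < a then x + a * q
      else if x < a + c then x + c * q + a * m
      else if x < a + c + b then x + b * q + (a + c) * m
      else x + c * q + (a + c + b) * m := by
  have hk : 0 < a + c + b + c := by omega
  simp only [tau]
  rw [Nat.add_mul_mod_self_left, Nat.mod_eq_of_lt hx,
    Nat.add_mul_div_left _ _ hk, Nat.div_eq_of_lt hx, Nat.zero_add, Nat.add_sub_cancel]

private lemma decomp (a b c m i : ℕ) (hk : 0 < a + c + b + c)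
    (hi : i < (m + 1) * (a + c + b + c)) :
    ∃ x q, x < a + c + b + c ∧ q ≤ m ∧ i = x + (a + c + b + c) * q := by
  refine ⟨i % (a + c + b + c), i / (a + c + b + c), Nat.mod_lt _ hk, ?_,
    (Nat.mod_add_div i _).symm⟩
  have h : i / (a + c + b + c) < m + 1 :=
    Nat.div_lt_of_lt_mul (by rw [Nat.mul_comm] at hi; exact hi)
  omega

private lemma tauInv_tau (a b c m : ℕ) :
    ∀ i < (m + 1) * (a + c + b + c), tauInv (m + 1) a b c (tau (m + 1) a b c i) = i := by
  intro i hi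
  have hk : 0 < a + c + b + c := by
    rcases Nat.eq_zero_or_pos (a + c + b + c) with h | h
    · rw [h, Nat.mul_zero] at hi; omega
    · exact h
  obtain ⟨x, q, hx, hq, rfl⟩ := decomp a b c m i hk hi
  rw [tau_eval a b c m x q hx]
  by_cases h1 : x < a
  · rw [if_pos h1]
    have ha : 0 < a := by omega
    have hb : x + a * q < a * (m + 1) := by
      have h2 : a * q ≤ a * m := Nat.mul_le_mul_left a hq
      have h3 : a * (m + 1) = a * m + a := by ring
      linarith
    simp only [tauInv]
    rw [if_pos hb, Nat.add_mul_mod_self_left, Nat.mod_eq_of_lt h1,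
      Nat.add_mul_div_left _ _ ha, Nat.div_eq_of_lt h1, Nat.zero_add]
  · rw [if_neg h1]
    by_cases h2 : x < a + c
    · rw [if_pos h2]
      obtain ⟨s, rfl⟩ : ∃ s, x = a + s := ⟨x - a, by omega⟩
      have hs : s < c := by omega
      have hc : 0 < c := by omega
      have e1 : a + s + c * q + a * m = a * (m + 1) + (s + c * q) := by ring
      rw [e1]
      have hcb : s + c * q < c * (m + 1) := by
        have h4 : c * q ≤ c * m := Nat.mul_le_mul_left c hq
        have h3 : c * (m + 1) = c * m + c := by ring
        linarith
      have hb0 : ¬ a * (m + 1) + (s + c * q) < a * (m + 1) :=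
        Nat.not_lt.mpr (Nat.le_add_right _ _)
      have hb2 : a * (m + 1) + (s + c * q) < (a + c) * (m + 1) := by
        have h3 : (a + c) * (m + 1) = a * (m + 1) + c * (m + 1) := by ring
        linarith
      simp only [tauInv]
      rw [if_neg hb0, if_pos hb2, Nat.add_sub_cancel_left,
        Nat.add_mul_mod_self_left, Nat.mod_eq_of_lt hs,
        Nat.add_mul_div_left _ _ hc, Nat.div_eq_of_lt hs, Nat.zero_add]
    · rw [if_neg h2]
      by_cases h3 : x < a + c + b
      · rw [if_pos h3]
        obtain ⟨t, rfl⟩ : ∃ t, x = a + c + t := ⟨x - (a + c), by omega⟩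
        have ht : t < b := by omega
        have hbpos : 0 < b := by omega
        have e1 : a + c + t + b * q + (a + c) * m = (a + c) * (m + 1) + (t + b * q) := by ring
        rw [e1]
        have hcb : t + b * q < b * (m + 1) := by
          have h4 : b * q ≤ b * m := Nat.mul_le_mul_left b hq
          have h5 : b * (m + 1) = b * m + b := by ring
          linarith
        have hmono : a * (m + 1) ≤ (a + c) * (m + 1) :=
          Nat.mul_le_mul_right _ (by omega)
        have hb0 : ¬ (a + c) * (m + 1) + (t + b * q) < a * (m + 1) :=
          Nat.not_lt.mpr (le_trans hmono (Nat.le_add_right _ _))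
        have hb1 : ¬ (a + c) * (m + 1) + (t + b * q) < (a + c) * (m + 1) :=
          Nat.not_lt.mpr (Nat.le_add_right _ _)
        have hb2 : (a + c) * (m + 1) + (t + b * q) < (a + c + b) * (m + 1) := by
          have h5 : (a + c + b) * (m + 1) = (a + c) * (m + 1) + b * (m + 1) := by ring
          linarith
        simp only [tauInv]
        rw [if_neg hb0, if_neg hb1, if_pos hb2, Nat.add_sub_cancel_left,
          Nat.add_mul_mod_self_left, Nat.mod_eq_of_lt ht,
          Nat.add_mul_div_left _ _ hbpos, Nat.div_eq_of_lt ht, Nat.zero_add]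
      · rw [if_neg h3]
        obtain ⟨s, rfl⟩ : ∃ s, x = a + c + b + s := ⟨x - (a + c + b), by omega⟩
        have hs : s < c := by omega
        have hc : 0 < c := by omega
        have e1 : a + c + b + s + c * q + (a + c + b) * m
            = (a + c + b) * (m + 1) + (s + c * q) := by ring
        rw [e1]
        have hcb : s + c * q < c * (m + 1) := by
          have h4 : c * q ≤ c * m := Nat.mul_le_mul_left c hq
          have h5 : c * (m + 1) = c * m + c := by ring
          linarith
        have hmono1 : a * (m + 1) ≤ (a + c + b) * (m + 1) :=
          Nat.mul_le_mul_right _ (by omega)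
        have hmono2 : (a + c) * (m + 1) ≤ (a + c + b) * (m + 1) :=
          Nat.mul_le_mul_right _ (by omega)
        have hb0 : ¬ (a + c + b) * (m + 1) + (s + c * q) < a * (m + 1) :=
          Nat.not_lt.mpr (le_trans hmono1 (Nat.le_add_right _ _))
        have hb1 : ¬ (a + c + b) * (m + 1) + (s + c * q) < (a + c) * (m + 1) :=
          Nat.not_lt.mpr (le_trans hmono2 (Nat.le_add_right _ _))
        have hb2 : ¬ (a + c + b) * (m + 1) + (s + c * q) < (a + c + b) * (m + 1) :=
          Nat.not_lt.mpr (Nat.le_add_right _ _)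
        simp only [tauInv]
        rw [if_neg hb0, if_neg hb1, if_neg hb2, Nat.add_sub_cancel_left,
          Nat.add_mul_mod_self_left, Nat.mod_eq_of_lt hs,
          Nat.add_mul_div_left _ _ hc, Nat.div_eq_of_lt hs, Nat.zero_add]

private lemma tau_tauInv (a b c m : ℕ) :
    ∀ j < (m + 1) * (a + c + b + c), tau (m + 1) a b c (tauInv (m + 1) a b c j) = j := by
  intro j hj
  simp only [tauInv]
  split_ifs with h1 h2 h3
  · -- block A
    have ha : 0 < a := by
      rcases Nat.eq_zero_or_pos a with rfl | h
      · rw [Nat.zero_mul] at h1; omega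
      · exact h
    have hr : j % a < a := Nat.mod_lt _ ha
    rw [tau_eval a b c m (j % a) (j / a) (lt_of_lt_of_le hr (by omega))]
    rw [if_pos hr]
    have hdm : a * (j / a) + j % a = j := Nat.div_add_mod j a
    linarith
  · -- block B1 (first C register)
    have hle : a * (m + 1) ≤ j := Nat.le_of_not_lt h1
    have hj' : j - a * (m + 1) < c * (m + 1) := by
      refine sub_lt_of _ _ _ hle ?_
      have h4 : (a + c) * (m + 1) = a * (m + 1) + c * (m + 1) := by ring
      linarith
    have hc : 0 < c := by
      rcases Nat.eq_zero_or_pos c with rfl | h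
      · rw [Nat.zero_mul] at hj'; omega
      · exact h
    have hs : (j - a * (m + 1)) % c < c := Nat.mod_lt _ hc
    have hdm : c * ((j - a * (m + 1)) / c) + (j - a * (m + 1)) % c = j - a * (m + 1) :=
      Nat.div_add_mod _ c
    rw [tau_eval a b c m (a + (j - a * (m + 1)) % c) ((j - a * (m + 1)) / c)
      (by omega)]
    rw [if_neg (by omega), if_pos (by omega)]
    have hsub : a * (m + 1) + (j - a * (m + 1)) = j := add_sub_of _ _ hle
    have h5 : a * (m + 1) = a * m + a := by ring
    linarith
  · -- block B2 (B register)
    have hle : (a + c) * (m + 1) ≤ j := Nat.le_of_not_lt h2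
    have hj' : j - (a + c) * (m + 1) < b * (m + 1) := by
      refine sub_lt_of _ _ _ hle ?_
      have h4 : (a + c + b) * (m + 1) = (a + c) * (m + 1) + b * (m + 1) := by ring
      linarith
    have hb : 0 < b := by
      rcases Nat.eq_zero_or_pos b with rfl | h
      · rw [Nat.zero_mul] at hj'; omega
      · exact h
    have hs : (j - (a + c) * (m + 1)) % b < b := Nat.mod_lt _ hb
    have hdm : b * ((j - (a + c) * (m + 1)) / b) + (j - (a + c) * (m + 1)) % b
        = j - (a + c) * (m + 1) := Nat.div_add_mod _ b
    rw [tau_eval a b c m (a + c + (j - (a + c) * (m + 1)) % b) ((j - (a + c) * (m + 1)) / b)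
      (by omega)]
    rw [if_neg (by omega), if_neg (by omega), if_pos (by omega)]
    have hsub : (a + c) * (m + 1) + (j - (a + c) * (m + 1)) = j := add_sub_of _ _ hle
    have h5 : (a + c) * (m + 1) = (a + c) * m + (a + c) := by ring
    linarith
  · -- block B3 (second C register)
    have hle : (a + c + b) * (m + 1) ≤ j := Nat.le_of_not_lt h3
    have hj' : j - (a + c + b) * (m + 1) < c * (m + 1) := by
      refine sub_lt_of _ _ _ hle ?_
      have h4 : (m + 1) * (a + c + b + c) = (a + c + b) * (m + 1) + c * (m + 1) := by ring
      linarith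
    have hc : 0 < c := by
      rcases Nat.eq_zero_or_pos c with rfl | h
      · rw [Nat.zero_mul] at hj'; omega
      · exact h
    have hs : (j - (a + c + b) * (m + 1)) % c < c := Nat.mod_lt _ hc
    have hdm : c * ((j - (a + c + b) * (m + 1)) / c) + (j - (a + c + b) * (m + 1)) % c
        = j - (a + c + b) * (m + 1) := Nat.div_add_mod _ c
    rw [tau_eval a b c m (a + c + b + (j - (a + c + b) * (m + 1)) % c)
      ((j - (a + c + b) * (m + 1)) / c) (by omega)]
    rw [if_neg (by omega), if_neg (by omega), if_neg (by omega)]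
    have hsub : (a + c + b) * (m + 1) + (j - (a + c + b) * (m + 1)) = j := add_sub_of _ _ hle
    have h5 : (a + c + b) * (m + 1) = (a + c + b) * m + (a + c + b) := by ring
    linarith

private lemma tau_mapsTo (a b c m : ℕ) :
    ∀ i < (m + 1) * (a + c + b + c),
      tau (m + 1) a b c i < (m + 1) * (a + c + b + c) := by
  intro i hi
  have hk : 0 < a + c + b + c := by
    rcases Nat.eq_zero_or_pos (a + c + b + c) with h | h
    · rw [h, Nat.mul_zero] at hi; omega
    · exact h
  obtain ⟨x, q, hx, hq, rfl⟩ := decomp a b c m i hk hi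
  rw [tau_eval a b c m x q hx]
  split_ifs with h1 h2 h3
  · have h4 : a * q ≤ a * m := Nat.mul_le_mul_left a hq
    have e : (m + 1) * (a + c + b + c) = a * m + a + (c + b + c) * (m + 1) := by ring
    have h5 : x + a * q < a * m + a := by linarith
    have h6 : a * m + a ≤ (m + 1) * (a + c + b + c) := by
      rw [e]; exact Nat.le_add_right _ _
    exact lt_of_lt_of_le h5 h6
  · have h4 : c * q ≤ c * m := Nat.mul_le_mul_left c hq
    have e : (m + 1) * (a + c + b + c) = (a + c + c * m + a * m) + (b + c) * (m + 1) := by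
      ring
    have h5 : x + c * q + a * m < a + c + c * m + a * m := by linarith
    have h6 : a + c + c * m + a * m ≤ (m + 1) * (a + c + b + c) := by
      rw [e]; exact Nat.le_add_right _ _
    exact lt_of_lt_of_le h5 h6
  · have h4 : b * q ≤ b * m := Nat.mul_le_mul_left b hq
    have e : (m + 1) * (a + c + b + c)
        = (a + c + b + b * m + (a + c) * m) + c * (m + 1) := by ring
    have h5 : x + b * q + (a + c) * m < a + c + b + b * m + (a + c) * m := by linarith
    have h6 : a + c + b + b * m + (a + c) * m ≤ (m + 1) * (a + c + b + c) := by
      rw [e]; exact Nat.le_add_right _ _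
    exact lt_of_lt_of_le h5 h6
  · have h4 : c * q ≤ c * m := Nat.mul_le_mul_left c hq
    have e : (m + 1) * (a + c + b + c)
        = a + c + b + c + c * m + (a + c + b) * m := by ring
    linarith

private lemma tauInv_mapsTo (a b c m : ℕ) :
    ∀ j < (m + 1) * (a + c + b + c),
      tauInv (m + 1) a b c j < (m + 1) * (a + c + b + c) := by
  intro j hj
  have key : ∀ x q : ℕ, x < a + c + b + c → q < m + 1 →
      x + (a + c + b + c) * q < (m + 1) * (a + c + b + c) := by
    intro x q hx hq
    have h4 : (a + c + b + c) * q ≤ (a + c + b + c) * m :=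
      Nat.mul_le_mul_left _ (by omega)
    have e : (m + 1) * (a + c + b + c) = (a + c + b + c) + (a + c + b + c) * m := by ring
    linarith
  simp only [tauInv]
  split_ifs with h1 h2 h3
  · have ha : 0 < a := by
      rcases Nat.eq_zero_or_pos a with rfl | h
      · rw [Nat.zero_mul] at h1; omega
      · exact h
    exact key _ _ (lt_of_lt_of_le (Nat.mod_lt _ ha) (by omega)) (Nat.div_lt_of_lt_mul h1)
  · have hle : a * (m + 1) ≤ j := Nat.le_of_not_lt h1
    have hj' : j - a * (m + 1) < c * (m + 1) := by
      refine sub_lt_of _ _ _ hle ?_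
      have h4 : (a + c) * (m + 1) = a * (m + 1) + c * (m + 1) := by ring
      linarith
    have hc : 0 < c := by
      rcases Nat.eq_zero_or_pos c with rfl | h
      · rw [Nat.zero_mul] at hj'; omega
      · exact h
    exact key _ _ (by have := Nat.mod_lt (j - a * (m + 1)) hc; omega)
      (Nat.div_lt_of_lt_mul hj')
  · have hle : (a + c) * (m + 1) ≤ j := Nat.le_of_not_lt h2
    have hj' : j - (a + c) * (m + 1) < b * (m + 1) := by
      refine sub_lt_of _ _ _ hle ?_
      have h4 : (a + c + b) * (m + 1) = (a + c) * (m + 1) + b * (m + 1) := by ring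
      linarith
    have hb : 0 < b := by
      rcases Nat.eq_zero_or_pos b with rfl | h
      · rw [Nat.zero_mul] at hj'; omega
      · exact h
    exact key _ _ (by have := Nat.mod_lt (j - (a + c) * (m + 1)) hb; omega)
      (Nat.div_lt_of_lt_mul hj')
  · have hle : (a + c + b) * (m + 1) ≤ j := Nat.le_of_not_lt h3
    have hj' : j - (a + c + b) * (m + 1) < c * (m + 1) := by
      refine sub_lt_of _ _ _ hle ?_
      have h4 : (m + 1) * (a + c + b + c) = (a + c + b) * (m + 1) + c * (m + 1) := by ring
      linarith
    have hc : 0 < c := by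
      rcases Nat.eq_zero_or_pos c with rfl | h
      · rw [Nat.zero_mul] at hj'; omega
      · exact h
    exact key _ _ (by have := Nat.mod_lt (j - (a + c + b) * (m + 1)) hc; omega)
      (Nat.div_lt_of_lt_mul hj')

/-- `τ` restricts to a bijection of `{0, 1, …, n·k − 1}` onto itself; equivalently,
it induces a permutation of `Fin (n·k)`. -/
theorem tau_bijOn (n a b c : ℕ) :
    Set.BijOn (tau n a b c)
      (Set.Iio (n * (a + c + b + c))) (Set.Iio (n * (a + c + b + c))) := by
  rcases Nat.eq_zero_or_pos (n * (a + c + b + c)) with h0 | hpos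
  · rw [h0]
    have h : Set.Iio (0 : ℕ) = ∅ := by ext x; simp
    rw [h]
    exact Set.bijOn_empty _
  · have hn : 0 < n := by
      rcases Nat.eq_zero_or_pos n with rfl | h
      · rw [Nat.zero_mul] at hpos; omega
      · exact h
    obtain ⟨m, rfl⟩ : ∃ m, n = m + 1 := ⟨n - 1, by omega⟩
    exact Set.InvOn.bijOn
      ⟨fun i hi => tauInv_tau a b c m i hi, fun j hj => tau_tauInv a b c m j hj⟩
      (fun i hi => tau_mapsTo a b c m i hi)
      (fun j hj => tauInv_mapsTo a b c m j hj)
end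

section
/- For every list N of natural numbers and all functions v, w : ℕ → ℕ, the square matrix σ(N,v,w) = (σ_f^N | σ_g^N) over F₂ is a permutation matrix: every row and every column of σ(N,v,w) contains exactly one nonzero entry, and that entry equals 1. -/
open Matrix

/-- `rowSize v w N = Σᵢ (v nᵢ + w nᵢ)`, the common row size `v(N) + w(N)` of the
matrices `σ_f^N`, `σ_g^N`, with rows in the interleaved order
(`v`-block of `n₁`, `w`-block of `n₁`, `v`-block of `n₂`, …). -/
def rowSize (v w : ℕ → ℕ) : List ℕ → ℕ
  | [] => 0
  | n :: N => (v n + w n) + rowSize v w N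

/-- `colSize v N = Σᵢ v(nᵢ) = v(N)`. -/
def colSize (v : ℕ → ℕ) : List ℕ → ℕ
  | [] => 0
  | n :: N => v n + colSize v N

/-- The matrix `σ_f^N` over `F₂ = ZMod 2`: `σ_f^{[]}` is the empty matrix and
`σ_f^{n::N'}` is the block matrix `[[I_{v(n)}, 0], [0, 0], [0, σ_f^{N'}]]`. -/
def sigmaF (v w : ℕ → ℕ) : (N : List ℕ) →
    Matrix (Fin (rowSize v w N)) (Fin (colSize v N)) (ZMod 2)
  | [] => 0
  | n :: N =>
    Matrix.reindex finSumFinEquiv finSumFinEquiv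
      (Matrix.fromBlocks
        (Matrix.reindex finSumFinEquiv (Equiv.refl (Fin (v n)))
          (Matrix.fromRows
            (1 : Matrix (Fin (v n)) (Fin (v n)) (ZMod 2))
            (0 : Matrix (Fin (w n)) (Fin (v n)) (ZMod 2))))
        0 0 (sigmaF v w N))

/-- The matrix `σ_g^N` over `F₂ = ZMod 2`: `σ_g^{[]}` is the empty matrix and
`σ_g^{n::N'}` is the block matrix `[[0, 0], [I_{w(n)}, 0], [0, σ_g^{N'}]]`. -/
def sigmaG (v w : ℕ → ℕ) : (N : List ℕ) →
    Matrix (Fin (rowSize v w N)) (Fin (colSize w N)) (ZMod 2)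
  | [] => 0
  | n :: N =>
    Matrix.reindex finSumFinEquiv finSumFinEquiv
      (Matrix.fromBlocks
        (Matrix.reindex finSumFinEquiv (Equiv.refl (Fin (w n)))
          (Matrix.fromRows
            (0 : Matrix (Fin (v n)) (Fin (w n)) (ZMod 2))
            (1 : Matrix (Fin (w n)) (Fin (w n)) (ZMod 2))))
        0 0 (sigmaG v w N))

/-- `σ(N,v,w) = (σ_f^N | σ_g^N)`, the square matrix of size `v(N) + w(N)` obtained by
placing `σ_f^N` and `σ_g^N` side by side. -/
def sigma' (v w : ℕ → ℕ) (N : List ℕ) :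
    Matrix (Fin (rowSize v w N)) (Fin (colSize v N + colSize w N)) (ZMod 2) :=
  Matrix.reindex (Equiv.refl _) finSumFinEquiv
    (Matrix.fromCols (sigmaF v w N) (sigmaG v w N))

/-!
Induction on `N`: up to reordering rows and columns, `σ(n :: N)` is the block diagonal matrix
`I_{v(n)+w(n)} ⊕ σ(N)`. Hence `σ(N)` is the matrix of a bijection between its rows and its
columns, and such a matrix has exactly one nonzero entry, equal to `1`, in each row and column.
-/

namespace PEquiv

variable {l m n p q R : Type*}

theorem reindex_toMatrix_toPEquiv [DecidableEq n] [DecidableEq q] [Zero R] [One R]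
    (e : m ≃ n) (f : m ≃ p) (g : n ≃ q) :
    reindex f g (e.toPEquiv.toMatrix : Matrix m n R) =
      (f.symm.trans (e.trans g)).toPEquiv.toMatrix := by
  ext i j
  simp [Equiv.eq_symm_apply]

theorem fromBlocks_toMatrix_toPEquiv [DecidableEq m] [DecidableEq n] [Zero R] [One R]
    (e₁ : l ≃ m) (e₂ : p ≃ n) :
    fromBlocks (e₁.toPEquiv.toMatrix : Matrix l m R) 0 0 e₂.toPEquiv.toMatrix =
      (e₁.sumCongr e₂).toPEquiv.toMatrix := by
  ext (i | i) (j | j) <;> simp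

theorem toMatrix_toPEquiv_ne_zero_iff [DecidableEq n] [Zero R] [One R] [NeZero (1 : R)]
    (e : m ≃ n) (i : m) (j : n) :
    (e.toPEquiv.toMatrix : Matrix m n R) i j ≠ 0 ↔ e i = j := by
  simp [eq_comm]

theorem toMatrix_toPEquiv_isPermutationMatrix [DecidableEq n] [Zero R] [One R] [NeZero (1 : R)]
    (e : m ≃ n) :
    (∀ i, ∃! j, (e.toPEquiv.toMatrix : Matrix m n R) i j ≠ 0) ∧
    (∀ j, ∃! i, (e.toPEquiv.toMatrix : Matrix m n R) i j ≠ 0) ∧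
    (∀ i j, (e.toPEquiv.toMatrix : Matrix m n R) i j ≠ 0 →
      (e.toPEquiv.toMatrix : Matrix m n R) i j = 1) := by
  simp only [toMatrix_toPEquiv_ne_zero_iff]
  refine ⟨fun i => ⟨e i, rfl, fun j h => h.symm⟩,
    fun j => ⟨e.symm j, e.apply_symm_apply j, fun i h => by rw [← h, e.symm_apply_apply]⟩, ?_⟩
  rintro i j rfl
  simp

end PEquiv

/- Stated for arbitrary sizes because for `sigma' v w (n :: N)` the sizes are `rowSize v w (n :: N)`
etc., which are only definitionally equal to the sums, and `simp` cannot see through that. -/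
theorem fromCols_fromBlocks_eq_reindex_fromBlocks_one {α : Type*} [Zero α] [One α]
    {a b R C D : ℕ} (F : Matrix (Fin R) (Fin C) α) (G : Matrix (Fin R) (Fin D) α) :
    reindex (Equiv.refl _) finSumFinEquiv
      (fromCols
        (reindex finSumFinEquiv finSumFinEquiv
          (fromBlocks
            (reindex finSumFinEquiv (Equiv.refl (Fin a))
              (fromRows (1 : Matrix (Fin a) (Fin a) α) (0 : Matrix (Fin b) (Fin a) α)))
            0 0 F))
        (reindex finSumFinEquiv finSumFinEquiv
          (fromBlocks
            (reindex finSumFinEquiv (Equiv.refl (Fin b))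
              (fromRows (0 : Matrix (Fin a) (Fin b) α) (1 : Matrix (Fin b) (Fin b) α)))
            0 0 G))) =
      reindex ((Equiv.sumCongr finSumFinEquiv (Equiv.refl _)).trans finSumFinEquiv)
        ((Equiv.sumCongr (Equiv.refl _) finSumFinEquiv.symm).trans <|
          (Equiv.sumSumSumComm _ _ _ _).trans <|
          (Equiv.sumCongr finSumFinEquiv finSumFinEquiv).trans finSumFinEquiv)
        (fromBlocks (1 : Matrix (Fin a ⊕ Fin b) _ α) 0 0
          (reindex (Equiv.refl _) finSumFinEquiv (fromCols F G))) := by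
  ext i j
  obtain ⟨(i | i) | i, rfl⟩ :=
    ((Equiv.sumCongr finSumFinEquiv (Equiv.refl _)).trans finSumFinEquiv).surjective i <;>
  obtain ⟨(j | j) | (j | j), rfl⟩ :=
    ((Equiv.sumCongr finSumFinEquiv finSumFinEquiv).trans finSumFinEquiv).surjective j <;>
  simp [one_apply, Equiv.sumSumSumComm, -finSumFinEquiv_apply_left, -finSumFinEquiv_apply_right]

theorem sigma'_cons (v w : ℕ → ℕ) (n : ℕ) (N : List ℕ) :
    ∃ (e₁ : (Fin (v n) ⊕ Fin (w n)) ⊕ Fin (rowSize v w N) ≃ Fin (rowSize v w (n :: N)))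
      (e₂ : (Fin (v n) ⊕ Fin (w n)) ⊕ Fin (colSize v N + colSize w N) ≃
        Fin (colSize v (n :: N) + colSize w (n :: N))),
      sigma' v w (n :: N) = reindex e₁ e₂ (fromBlocks 1 0 0 (sigma' v w N)) :=
  ⟨_, _, fromCols_fromBlocks_eq_reindex_fromBlocks_one (sigmaF v w N) (sigmaG v w N)⟩

theorem sigma'_eq_toMatrix_toPEquiv (v w : ℕ → ℕ) : ∀ N : List ℕ,
    ∃ e : Fin (rowSize v w N) ≃ Fin (colSize v N + colSize w N),
      sigma' v w N = e.toPEquiv.toMatrix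
  | [] => ⟨finCongr rfl, by ext i; exact i.elim0⟩
  | n :: N => by
    obtain ⟨e, he⟩ := sigma'_eq_toMatrix_toPEquiv v w N
    obtain ⟨e₁, e₂, hcons⟩ := sigma'_cons v w n N
    rw [hcons, he, ← PEquiv.toMatrix_refl, ← Equiv.toPEquiv_refl,
      PEquiv.fromBlocks_toMatrix_toPEquiv, PEquiv.reindex_toMatrix_toPEquiv]
    exact ⟨_, rfl⟩

/-- `σ(N,v,w)` is a permutation matrix: every row and every column contains exactly one
nonzero entry, and every nonzero entry equals `1`. -/
theorem sigma'_isPermutationMatrix (v w : ℕ → ℕ) (N : List ℕ) :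
    (∀ i, ∃! j, sigma' v w N i j ≠ 0) ∧
    (∀ j, ∃! i, sigma' v w N i j ≠ 0) ∧
    (∀ i j, sigma' v w N i j ≠ 0 → sigma' v w N i j = 1) := by
  obtain ⟨e, he⟩ := sigma'_eq_toMatrix_toPEquiv v w N
  rw [he]
  exact PEquiv.toMatrix_toPEquiv_isPermutationMatrix e
end

section
/- For every list N = [n₁, …, n_m] of natural numbers and all functions v, w : ℕ → ℕ, the matrix σ(N,v,w) over F₂ is the permutation matrix of the interleaving bijection, namely: an entry σ(N,v,w)[row, col] equals 1 if and only if either there exist an index i < m and p < v(n_{i+1}) with col = Σ_{l < i} v(n_{l+1}) + p and row = Σ_{l < i} (v(n_{l+1}) + w(n_{l+1})) + p, or there exist i < m and p < w(n_{i+1}) with col = v(N) + Σ_{l < i} w(n_{l+1}) + p and row = Σ_{l < i} (v(n_{l+1}) + w(n_{l+1})) + v(n_{i+1}) + p. Hence σ(N,v,w) rearranges the grouped layout v(n₁)···v(n_m) w(n₁)···w(n_m) of columns into the interleaved layout (v(n₁), w(n₁)) ··· (v(n_m), w(n_m)) of rows. -/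
open Matrix

lemma rowsL_entry {k l : ℕ} (r : Fin (k + l)) (c : Fin k) :
    Matrix.reindex finSumFinEquiv (Equiv.refl (Fin k))
      (Matrix.fromRows (1 : Matrix (Fin k) (Fin k) (ZMod 2))
        (0 : Matrix (Fin l) (Fin k) (ZMod 2))) r c = 1 ↔ (r : ℕ) = c := by
  rw [Matrix.reindex_apply]
  rcases h : finSumFinEquiv.symm r with a | a
  · have hr : (r : ℕ) = a := by rw [(Equiv.symm_apply_eq _).mp h]; simp
    simp only [Matrix.submatrix_apply, h, Equiv.refl_symm, Equiv.refl_apply,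
      Matrix.fromRows_apply_inl, Matrix.one_apply, hr]
    split_ifs with hac
    · simp [Fin.ext_iff] at hac; simp [hac]
    · simp [Fin.ext_iff] at hac; simp [hac]
  · have hr : (r : ℕ) = k + a := by rw [(Equiv.symm_apply_eq _).mp h]; simp
    simp only [Matrix.submatrix_apply, h, Equiv.refl_symm, Equiv.refl_apply,
      Matrix.fromRows_apply_inr, Matrix.zero_apply, hr]
    constructor
    · intro hh; exact absurd hh (by decide)
    · intro hh; have := c.isLt; omega

lemma rowsR_entry {k l : ℕ} (r : Fin (k + l)) (c : Fin l) :
    Matrix.reindex finSumFinEquiv (Equiv.refl (Fin l))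
      (Matrix.fromRows (0 : Matrix (Fin k) (Fin l) (ZMod 2))
        (1 : Matrix (Fin l) (Fin l) (ZMod 2))) r c = 1 ↔ (r : ℕ) = k + c := by
  rw [Matrix.reindex_apply]
  rcases h : finSumFinEquiv.symm r with a | a
  · have hr : (r : ℕ) = a := by rw [(Equiv.symm_apply_eq _).mp h]; simp
    simp only [Matrix.submatrix_apply, h, Equiv.refl_symm, Equiv.refl_apply,
      Matrix.fromRows_apply_inl, Matrix.zero_apply, hr]
    constructor
    · intro hh; exact absurd hh (by decide)
    · intro hh; have := a.isLt; omega
  · have hr : (r : ℕ) = k + a := by rw [(Equiv.symm_apply_eq _).mp h]; simp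
    simp only [Matrix.submatrix_apply, h, Equiv.refl_symm, Equiv.refl_apply,
      Matrix.fromRows_apply_inr, Matrix.one_apply, hr]
    split_ifs with hac
    · simp [Fin.ext_iff] at hac; simp [hac]
    · simp [Fin.ext_iff] at hac; simp; omega

lemma blocks_entry {m₁ m₂ n₁ n₂ : ℕ} (A : Matrix (Fin m₁) (Fin n₁) (ZMod 2))
    (D : Matrix (Fin m₂) (Fin n₂) (ZMod 2)) (i : Fin (m₁ + m₂)) (j : Fin (n₁ + n₂)) :
    Matrix.reindex finSumFinEquiv finSumFinEquiv (Matrix.fromBlocks A 0 0 D) i j = 1 ↔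
      ((∃ (hi : (i : ℕ) < m₁) (hj : (j : ℕ) < n₁), A ⟨i, hi⟩ ⟨j, hj⟩ = 1) ∨
       (∃ (hi : m₁ ≤ (i : ℕ)) (hj : n₁ ≤ (j : ℕ)),
          D ⟨(i : ℕ) - m₁, by have := i.isLt; omega⟩ ⟨(j : ℕ) - n₁, by have := j.isLt; omega⟩ = 1)) := by
  rw [Matrix.reindex_apply]
  rcases hi : finSumFinEquiv.symm i with a | a <;> rcases hj : finSumFinEquiv.symm j with b | b <;>
    simp only [Matrix.submatrix_apply, hi, hj, Matrix.fromBlocks_apply₁₁,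
      Matrix.fromBlocks_apply₁₂, Matrix.fromBlocks_apply₂₁, Matrix.fromBlocks_apply₂₂,
      Matrix.zero_apply] <;>
    have hia := a.isLt <;> have hjb := b.isLt
  · have ha : (i : ℕ) = a := by rw [(Equiv.symm_apply_eq _).mp hi]; simp
    have hb : (j : ℕ) = b := by rw [(Equiv.symm_apply_eq _).mp hj]; simp
    constructor
    · intro h
      exact Or.inl ⟨by omega, by omega, by convert h using 2 <;> exact Fin.ext (by simp only [Fin.val_mk]; omega)⟩
    · rintro (⟨h1, h2, h⟩ | ⟨h1, h2, h⟩)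
      · convert h using 2 <;> exact Fin.ext (by simp only [Fin.val_mk]; omega)
      · omega
  · have ha : (i : ℕ) = a := by rw [(Equiv.symm_apply_eq _).mp hi]; simp
    have hb : (j : ℕ) = n₁ + b := by rw [(Equiv.symm_apply_eq _).mp hj]; simp
    constructor
    · intro h; exact absurd h (by decide)
    · rintro (⟨h1, h2, h⟩ | ⟨h1, h2, h⟩) <;> omega
  · have ha : (i : ℕ) = m₁ + a := by rw [(Equiv.symm_apply_eq _).mp hi]; simp
    have hb : (j : ℕ) = b := by rw [(Equiv.symm_apply_eq _).mp hj]; simp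
    constructor
    · intro h; exact absurd h (by decide)
    · rintro (⟨h1, h2, h⟩ | ⟨h1, h2, h⟩) <;> omega
  · have ha : (i : ℕ) = m₁ + a := by rw [(Equiv.symm_apply_eq _).mp hi]; simp
    have hb : (j : ℕ) = n₁ + b := by rw [(Equiv.symm_apply_eq _).mp hj]; simp
    constructor
    · intro h
      exact Or.inr ⟨by omega, by omega, by convert h using 2 <;> exact Fin.ext (by simp only [Fin.val_mk]; omega)⟩
    · rintro (⟨h1, h2, h⟩ | ⟨h1, h2, h⟩)
      · omega
      · convert h using 2 <;> exact Fin.ext (by simp only [Fin.val_mk]; omega)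

lemma sigmaF_entry (v w : ℕ → ℕ) (N : List ℕ) :
    ∀ (row : Fin (rowSize v w N)) (col : Fin (colSize v N)),
    sigmaF v w N row col = 1 ↔
      ∃ i, ∃ hi : i < N.length, ∃ p, p < v (N.get ⟨i, hi⟩) ∧
        (col : ℕ) = colSize v (N.take i) + p ∧ (row : ℕ) = rowSize v w (N.take i) + p := by
  induction N with
  | nil => intro row _; exact row.elim0
  | cons n N ih =>
    intro row col
    rw [show sigmaF v w (n :: N) = Matrix.reindex finSumFinEquiv finSumFinEquiv
      (Matrix.fromBlocks
        (Matrix.reindex finSumFinEquiv (Equiv.refl (Fin (v n)))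
          (Matrix.fromRows (1 : Matrix (Fin (v n)) (Fin (v n)) (ZMod 2))
            (0 : Matrix (Fin (w n)) (Fin (v n)) (ZMod 2))))
        0 0 (sigmaF v w N)) from rfl]
    refine (blocks_entry (m₁ := v n + w n) (n₁ := v n) _ _ row col).trans ?_
    constructor
    · rintro (⟨h1, h2, h⟩ | ⟨h1, h2, h⟩)
      · rw [rowsL_entry] at h
        simp only [Fin.val_mk] at h
        exact ⟨0, by simp, (col : ℕ), by simpa [rowSize, colSize] using ⟨h2, h⟩⟩
      · rw [ih] at h
        obtain ⟨i, hi, p, hp, hc, hr⟩ := h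
        refine ⟨i + 1, by simpa using hi, p, ?_⟩
        simp only [List.get_eq_getElem, List.getElem_cons_succ, List.take_succ_cons, colSize, rowSize,
          Fin.val_mk] at *
        omega
    · rintro ⟨i, hi, p, hp, hc, hr⟩
      match i with
      | 0 =>
        simp only [List.get_eq_getElem, List.getElem_cons_zero, List.take_zero, colSize, rowSize] at hc hr hp
        refine Or.inl ⟨by omega, by omega, ?_⟩
        rw [rowsL_entry]; simp; omega
      | i + 1 =>
        simp only [List.get_eq_getElem, List.getElem_cons_succ, List.take_succ_cons, colSize, rowSize] at hc hr hp
        have hle1 : (v n + w n) ≤ (row : ℕ) := by omega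
        have hle2 : v n ≤ (col : ℕ) := by omega
        refine Or.inr ⟨hle1, hle2, ?_⟩
        rw [ih]
        exact ⟨i, by simpa using hi, p, by simpa using hp, by simp [List.get_eq_getElem]; omega, by simp [List.get_eq_getElem]; omega⟩

lemma sigmaG_entry (v w : ℕ → ℕ) (N : List ℕ) :
    ∀ (row : Fin (rowSize v w N)) (col : Fin (colSize w N)),
    sigmaG v w N row col = 1 ↔
      ∃ i, ∃ hi : i < N.length, ∃ p, p < w (N.get ⟨i, hi⟩) ∧
        (col : ℕ) = colSize w (N.take i) + p ∧
        (row : ℕ) = rowSize v w (N.take i) + v (N.get ⟨i, hi⟩) + p := by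
  induction N with
  | nil => intro row _; exact row.elim0
  | cons n N ih =>
    intro row col
    rw [show sigmaG v w (n :: N) = Matrix.reindex finSumFinEquiv finSumFinEquiv
      (Matrix.fromBlocks
        (Matrix.reindex finSumFinEquiv (Equiv.refl (Fin (w n)))
          (Matrix.fromRows (0 : Matrix (Fin (v n)) (Fin (w n)) (ZMod 2))
            (1 : Matrix (Fin (w n)) (Fin (w n)) (ZMod 2))))
        0 0 (sigmaG v w N)) from rfl]
    refine (blocks_entry (m₁ := v n + w n) (n₁ := w n) _ _ row col).trans ?_
    constructor
    · rintro (⟨h1, h2, h⟩ | ⟨h1, h2, h⟩)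
      · rw [rowsR_entry] at h
        simp only [Fin.val_mk] at h
        exact ⟨0, by simp, (col : ℕ), by simpa [rowSize, colSize] using ⟨h2, by omega⟩⟩
      · rw [ih] at h
        obtain ⟨i, hi, p, hp, hc, hr⟩ := h
        refine ⟨i + 1, by simpa using hi, p, ?_⟩
        simp only [List.get_eq_getElem, List.getElem_cons_succ, List.take_succ_cons, colSize, rowSize,
          Fin.val_mk] at *
        omega
    · rintro ⟨i, hi, p, hp, hc, hr⟩
      match i with
      | 0 =>
        simp only [List.get_eq_getElem, List.getElem_cons_zero, List.take_zero, colSize, rowSize] at hc hr hp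
        refine Or.inl ⟨by omega, by omega, ?_⟩
        rw [rowsR_entry]; simp; omega
      | i + 1 =>
        simp only [List.get_eq_getElem, List.getElem_cons_succ, List.take_succ_cons, colSize, rowSize] at hc hr hp
        have hle1 : (v n + w n) ≤ (row : ℕ) := by omega
        have hle2 : w n ≤ (col : ℕ) := by omega
        refine Or.inr ⟨hle1, hle2, ?_⟩
        rw [ih]
        exact ⟨i, by simpa using hi, p, by simpa using hp, by simp [List.get_eq_getElem]; omega, by simp [List.get_eq_getElem]; omega⟩

lemma colSize_take_le (v : ℕ → ℕ) : ∀ (N : List ℕ) (i : ℕ) (hi : i < N.length),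
    colSize v (N.take i) + v (N.get ⟨i, hi⟩) ≤ colSize v N := by
  intro N
  induction N with
  | nil => intro i hi; simp at hi
  | cons n N ih =>
    intro i hi
    match i with
    | 0 => simp [colSize]
    | i + 1 =>
      have := ih i (by simpa using hi)
      simp only [List.get_eq_getElem, List.getElem_cons_succ, List.take_succ_cons,
        colSize] at *
      omega

/-- `σ(N,v,w)` is the permutation matrix of the interleaving bijection: the entry at
`(row, col)` equals `1` iff either `col` is the `p`-th wire of the `i`-th `v`-block in
the grouped column layout and `row` is the `p`-th wire of the `i`-th `v`-block in the
interleaved row layout, or similarly for the `w`-blocks. Hence `σ(N,v,w)` rearranges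
the grouped layout `v(n₁)⋯v(n_m) w(n₁)⋯w(n_m)` of columns into the interleaved layout
`(v(n₁), w(n₁)) ⋯ (v(n_m), w(n_m))` of rows. -/
theorem sigma'_entry_eq_one_iff (v w : ℕ → ℕ) (N : List ℕ)
    (row : Fin (rowSize v w N)) (col : Fin (colSize v N + colSize w N)) :
    sigma' v w N row col = 1 ↔
      ((∃ i, ∃ hi : i < N.length, ∃ p, p < v (N.get ⟨i, hi⟩) ∧
          (col : ℕ) = colSize v (N.take i) + p ∧
          (row : ℕ) = rowSize v w (N.take i) + p) ∨
       (∃ i, ∃ hi : i < N.length, ∃ p, p < w (N.get ⟨i, hi⟩) ∧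
          (col : ℕ) = colSize v N + colSize w (N.take i) + p ∧
          (row : ℕ) = rowSize v w (N.take i) + v (N.get ⟨i, hi⟩) + p)) := by
  rw [sigma', Matrix.reindex_apply, Matrix.submatrix_apply]
  rcases h : finSumFinEquiv.symm col with c | c
  · have hc : (col : ℕ) = c := by rw [(Equiv.symm_apply_eq _).mp h]; simp
    have hlt := c.isLt
    simp only [Equiv.refl_symm, Equiv.refl_apply, Matrix.fromCols_apply_inl]; rw [sigmaF_entry]
    constructor
    · rintro ⟨i, hi, p, hp, hcc, hr⟩
      exact Or.inl ⟨i, hi, p, hp, by omega, hr⟩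
    · rintro (⟨i, hi, p, hp, hcc, hr⟩ | ⟨i, hi, p, hp, hcc, hr⟩)
      · exact ⟨i, hi, p, hp, by omega, hr⟩
      · omega
  · have hc : (col : ℕ) = colSize v N + c := by rw [(Equiv.symm_apply_eq _).mp h]; simp
    have hlt := c.isLt
    simp only [Equiv.refl_symm, Equiv.refl_apply, Matrix.fromCols_apply_inr]; rw [sigmaG_entry]
    constructor
    · rintro ⟨i, hi, p, hp, hcc, hr⟩
      exact Or.inr ⟨i, hi, p, hp, by omega, hr⟩
    · rintro (⟨i, hi, p, hp, hcc, hr⟩ | ⟨i, hi, p, hp, hcc, hr⟩)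
      · have := colSize_take_le v N i hi; omega
      · exact ⟨i, hi, p, hp, by omega, hr⟩
end

section
/- For all natural numbers k, n, m and all phase vectors α, β : Fin k → ℝ, the interpretations of bold Z-spiders satisfy the fusion identity along one shared wire: Z(1, m, β) · Z(n, 1, α) = Z(n, m, α + β), where the matrix product contracts the single intermediate register index and α + β denotes the pointwise sum of phase vectors. -/
open Matrix BigOperators

/-- The standard interpretation `V = Σ_{x ∈ F₂^k} e^{i x • α} |x⟩^{⊗m} ⟨x|^{⊗n}` of the
bold Z-spider of the Scalable ZX-calculus with `n` inputs, `m` outputs, and phase vector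
`α` on registers of `k` qubits. -/
noncomputable def Zspider (k n m : ℕ) (α : Fin k → ℝ) :
    Matrix (Fin m → (Fin k → ZMod 2)) (Fin n → (Fin k → ZMod 2)) ℂ :=
  fun ybar xbar => ∑ x : Fin k → ZMod 2,
    (∏ i : Fin m, if ybar i = x then (1 : ℂ) else 0) *
    (∏ j : Fin n, if xbar j = x then (1 : ℂ) else 0) *
    Complex.exp (Complex.I * ∑ l : Fin k, ((x l).val : ℂ) * (α l : ℂ))

/-- Spider fusion along one shared wire: `Z(1, m, β) · Z(n, 1, α) = Z(n, m, α + β)`,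
where the matrix product contracts the single intermediate register index and `α + β`
is the pointwise sum of the phase vectors. -/
theorem Zspider_fusion (k n m : ℕ) (α β : Fin k → ℝ) :
    Zspider k 1 m β * Zspider k n 1 α = Zspider k n m (α + β) := by
  funext ybar xbar
  rw [Matrix.mul_apply]
  simp only [Zspider, Fin.prod_univ_one]
  rw [← (Equiv.funUnique (Fin 1) (Fin k → ZMod 2)).symm.sum_comp]
  simp only [Equiv.funUnique, Equiv.coe_fn_symm_mk, Function.const_apply]
  refine Finset.sum_congr rfl fun z _ => ?_
  rw [Finset.sum_mul]
  rw [Finset.sum_eq_single z, Finset.sum_eq_single z]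
  · rw [mul_mul_mul_comm, ← Complex.exp_add]
    congr 1
    · simp
    · rw [← mul_add, ← Finset.sum_add_distrib]
      congr 1
      congr 1
      refine Finset.sum_congr rfl fun l _ => ?_
      rw [Pi.add_apply]
      push_cast
      ring
  · intro b _ hb
    simp [Equiv.piUnique_symm_apply, if_neg (Ne.symm hb)]
  · exact fun h => absurd (Finset.mem_univ z) h
  · intro b _ hb
    simp [Equiv.piUnique_symm_apply, if_neg (Ne.symm hb)]
  · exact fun h => absurd (Finset.mem_univ z) h
end
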